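/- arXiv:cond-mat/9605132 — 3 statements merged into one kernel-verified Lean document; each statement's English description precedes it below -/
import Mathlib

section
/- Consider a rectangular resistor network of dimensions (L, A) on ℤ² with i.i.d. nonnegative conductances, with closed boundary conditions (potential fixed to n₁·v₀ on the whole boundary). Then the total dissipation W^CBC_{L,A} is subadditive in L for each fixed A: if L = L₁ + L₂, splitting the rectangle into two pieces of lengths L₁ and L₂, one has W^CBC_{L,A} ≤ W^CBC_{L₁,A} + (W^CBC_{L₂,A} ∘ τ^{L₁}), where τ is the translation by one unit in the longitudinal direction on the probability space. -/
open Filter MeasureTheory Topology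

noncomputable section

/-- A conductance field on `ℤ²`: for each site, the conductance of the link to
the right (`.1`, longitudinal) and of the link upwards (`.2`, transverse). -/
abbrev CField := (ℤ × ℤ) → ℝ × ℝ

/-- The field of conductances is nonnegative. -/
def nonnegField (C : CField) : Prop := ∀ p, 0 ≤ (C p).1 ∧ 0 ≤ (C p).2

/-- Dirichlet energy (dissipation) of the potential `φ` on the rectangle with
`L` longitudinal links and `A` transverse sites (rows `0,…,A-1`). -/
def netEnergy (C : CField) (L A : ℕ) (φ : ℤ × ℤ → ℝ) : ℝ :=
  (∑ i ∈ Finset.range L, ∑ j ∈ Finset.range A,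
    (φ ((i : ℤ), (j : ℤ)) - φ ((i : ℤ) + 1, (j : ℤ)))^2 * (C ((i : ℤ), (j : ℤ))).1) +
  (∑ i ∈ Finset.range (L+1), ∑ j ∈ Finset.range (A-1),
    (φ ((i : ℤ), (j : ℤ)) - φ ((i : ℤ), (j : ℤ) + 1))^2 * (C ((i : ℤ), (j : ℤ))).2)

/-- Open boundary conditions: the potential is fixed only on the two transverse
ends, to `0` and `L v₀`. -/
def obcOK (L A : ℕ) (v₀ : ℝ) (φ : ℤ × ℤ → ℝ) : Prop :=
  ∀ j ∈ Finset.range A, φ (0, (j : ℤ)) = 0 ∧ φ ((L : ℤ), (j : ℤ)) = L * v₀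

/-- Closed boundary conditions: the potential is fixed to `n₁ v₀` on the whole
boundary of the rectangle. -/
def cbcOK (L A : ℕ) (v₀ : ℝ) (φ : ℤ × ℤ → ℝ) : Prop :=
  ∀ i ∈ Finset.range (L+1), ∀ j ∈ Finset.range A,
    (i = 0 ∨ i = L ∨ j = 0 ∨ j = A - 1) → φ ((i : ℤ), (j : ℤ)) = i * v₀

/-- Total dissipation with open boundary conditions: minimal Dirichlet energy. -/
def WOBC (C : CField) (v₀ : ℝ) (L A : ℕ) : ℝ :=
  ⨅ φ : {φ : ℤ × ℤ → ℝ // obcOK L A v₀ φ}, netEnergy C L A φ.1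

/-- Total dissipation with closed boundary conditions: minimal Dirichlet energy. -/
def WCBC (C : CField) (v₀ : ℝ) (L A : ℕ) : ℝ :=
  ⨅ φ : {φ : ℤ × ℤ → ℝ // cbcOK L A v₀ φ}, netEnergy C L A φ.1

/-- Translation of the conductance field by `k` in the longitudinal direction. -/
def shiftH (k : ℤ) (C : CField) : CField := fun p => C (p.1 + k, p.2)

/-- Translation of the conductance field by `k` in the transverse direction. -/
def shiftV (k : ℤ) (C : CField) : CField := fun p => C (p.1, p.2 + k)

lemma netEnergy_nonneg (C : CField) (hC : nonnegField C) (L A : ℕ) (φ : ℤ × ℤ → ℝ) :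
    0 ≤ netEnergy C L A φ := by
  unfold netEnergy
  have h1 : ∀ (n m : ℕ) (f : ℤ × ℤ → ℝ) (g : ℤ × ℤ → ℝ),
      (∀ p, 0 ≤ g p) → 0 ≤ ∑ i ∈ Finset.range n, ∑ j ∈ Finset.range m, (f ((i:ℤ),(j:ℤ)))^2 * g ((i:ℤ),(j:ℤ)) := by
    intro n m f g hg
    exact Finset.sum_nonneg fun i _ => Finset.sum_nonneg fun j _ =>
      mul_nonneg (sq_nonneg _) (hg _)
  refine add_nonneg ?_ ?_
  · exact Finset.sum_nonneg fun i _ => Finset.sum_nonneg fun j _ =>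
      mul_nonneg (sq_nonneg _) (hC _).1
  · exact Finset.sum_nonneg fun i _ => Finset.sum_nonneg fun j _ =>
      mul_nonneg (sq_nonneg _) (hC _).2

lemma lin_cbc (L A : ℕ) (v₀ : ℝ) : cbcOK L A v₀ (fun p => (p.1 : ℝ) * v₀) := by
  intro i _ j _ _
  push_cast
  ring

lemma glue (C : CField) (v₀ : ℝ) (L₁ L₂ A : ℕ) (hL₂ : 1 ≤ L₂) (hA : 1 ≤ A)
    (φ₁ φ₂ : ℤ × ℤ → ℝ) (h₁ : cbcOK L₁ A v₀ φ₁) (h₂ : cbcOK L₂ A v₀ φ₂) :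
    ∃ φ, cbcOK (L₁ + L₂) A v₀ φ ∧
      netEnergy C (L₁ + L₂) A φ = netEnergy C L₁ A φ₁ + netEnergy (shiftH L₁ C) L₂ A φ₂ := by
  classical
  set φ : ℤ × ℤ → ℝ := fun p => if p.1 ≤ (L₁ : ℤ) then φ₁ p else (L₁ : ℝ) * v₀ + φ₂ (p.1 - L₁, p.2)
    with hφdef
  have hleft : ∀ a b : ℤ, a ≤ (L₁ : ℤ) → φ (a, b) = φ₁ (a, b) := by
    intro a b h
    simp only [hφdef]
    rw [if_pos h]
  have hmid : ∀ j ∈ Finset.range A, φ₁ ((L₁ : ℤ), (j : ℤ)) = (L₁ : ℝ) * v₀ := by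
    intro j hj
    exact h₁ L₁ (Finset.self_mem_range_succ L₁) j hj (Or.inr (Or.inl rfl))
  have hzero : ∀ j : ℕ, j < A → φ₂ (0, (j : ℤ)) = 0 := by
    intro j hj
    have := h₂ 0 (Finset.mem_range.mpr (by omega)) j (Finset.mem_range.mpr hj) (Or.inl rfl)
    simpa using this
  have hright : ∀ k : ℕ, 1 ≤ k → ∀ b : ℤ,
      φ ((L₁ : ℤ) + (k : ℤ), b) = (L₁ : ℝ) * v₀ + φ₂ ((k : ℤ), b) := by
    intro k hk b
    simp only [hφdef]
    rw [if_neg (by omega)]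
    simp [add_sub_cancel_left]
  have hr : ∀ k : ℕ, k ≤ L₂ → ∀ j : ℕ, j < A →
      φ ((L₁ : ℤ) + (k : ℤ), (j : ℤ)) = (L₁ : ℝ) * v₀ + φ₂ ((k : ℤ), (j : ℤ)) := by
    intro k hk j hj
    rcases Nat.eq_zero_or_pos k with rfl | hk1
    · push_cast
      rw [add_zero, hleft _ _ le_rfl, hmid j (Finset.mem_range.mpr hj), hzero j hj, add_zero]
    · exact hright k hk1 (j : ℤ)
  refine ⟨φ, ?_, ?_⟩
  · -- boundary conditions
    intro i hi j hj hcond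
    rw [Finset.mem_range] at hi
    rcases le_or_gt i L₁ with h | h
    · rw [hleft _ _ (by exact_mod_cast h)]
      refine h₁ i (Finset.mem_range.mpr (by omega)) j hj ?_
      rcases hcond with h0 | hL | hj0 | hjA
      · exact Or.inl h0
      · exact Or.inr (Or.inl (by omega))
      · exact Or.inr (Or.inr (Or.inl hj0))
      · exact Or.inr (Or.inr (Or.inr hjA))
    · obtain ⟨k, hk1, hkL, rfl⟩ : ∃ k : ℕ, 1 ≤ k ∧ k ≤ L₂ ∧ i = L₁ + k :=
        ⟨i - L₁, by omega, by omega, by omega⟩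
      have hcast : ((L₁ + k : ℕ) : ℤ) = (L₁ : ℤ) + (k : ℤ) := by push_cast; ring
      rw [hcast, hright k hk1 (j : ℤ)]
      have hk2 : φ₂ ((k : ℤ), (j : ℤ)) = (k : ℝ) * v₀ := by
        refine h₂ k (Finset.mem_range.mpr (by omega)) j hj ?_
        rcases hcond with h0 | hL | hj0 | hjA
        · omega
        · exact Or.inr (Or.inl (by omega))
        · exact Or.inr (Or.inr (Or.inl hj0))
        · exact Or.inr (Or.inr (Or.inr hjA))
      rw [hk2]
      push_cast
      ring
  · -- energy identity
    unfold netEnergy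
    have hlong :
        (∑ i ∈ Finset.range (L₁ + L₂), ∑ j ∈ Finset.range A,
          (φ ((i : ℤ), (j : ℤ)) - φ ((i : ℤ) + 1, (j : ℤ)))^2 * (C ((i : ℤ), (j : ℤ))).1)
        = (∑ i ∈ Finset.range L₁, ∑ j ∈ Finset.range A,
            (φ₁ ((i : ℤ), (j : ℤ)) - φ₁ ((i : ℤ) + 1, (j : ℤ)))^2 * (C ((i : ℤ), (j : ℤ))).1)
        + (∑ i ∈ Finset.range L₂, ∑ j ∈ Finset.range A,
            (φ₂ ((i : ℤ), (j : ℤ)) - φ₂ ((i : ℤ) + 1, (j : ℤ)))^2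
              * (shiftH (L₁ : ℤ) C ((i : ℤ), (j : ℤ))).1) := by
      rw [Finset.sum_range_add]
      congr 1
      · refine Finset.sum_congr rfl fun i hi => Finset.sum_congr rfl fun j hj => ?_
        rw [Finset.mem_range] at hi
        rw [hleft _ _ (by exact_mod_cast hi.le), hleft _ _ (by
          have : (i : ℤ) + 1 = ((i + 1 : ℕ) : ℤ) := by push_cast; ring
          rw [this]; exact_mod_cast hi)]
      · refine Finset.sum_congr rfl fun k hk => Finset.sum_congr rfl fun j hj => ?_
        rw [Finset.mem_range] at hk hj
        have hcast : ((L₁ + k : ℕ) : ℤ) = (L₁ : ℤ) + (k : ℤ) := by push_cast; ring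
        have hcast2 : (L₁ : ℤ) + (k : ℤ) + 1 = (L₁ : ℤ) + ((k + 1 : ℕ) : ℤ) := by push_cast; ring
        rw [hcast, hcast2, hr k hk.le j hj, hright (k + 1) (by omega) (j : ℤ)]
        have hC : (C ((L₁ : ℤ) + (k : ℤ), (j : ℤ))).1
            = (shiftH (L₁ : ℤ) C ((k : ℤ), (j : ℤ))).1 := by
          simp [shiftH, add_comm]
        rw [hC]
        push_cast
        ring
    have htrans :
        (∑ i ∈ Finset.range (L₁ + L₂ + 1), ∑ j ∈ Finset.range (A - 1),
          (φ ((i : ℤ), (j : ℤ)) - φ ((i : ℤ), (j : ℤ) + 1))^2 * (C ((i : ℤ), (j : ℤ))).2)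
        = (∑ i ∈ Finset.range (L₁ + 1), ∑ j ∈ Finset.range (A - 1),
            (φ₁ ((i : ℤ), (j : ℤ)) - φ₁ ((i : ℤ), (j : ℤ) + 1))^2 * (C ((i : ℤ), (j : ℤ))).2)
        + (∑ i ∈ Finset.range (L₂ + 1), ∑ j ∈ Finset.range (A - 1),
            (φ₂ ((i : ℤ), (j : ℤ)) - φ₂ ((i : ℤ), (j : ℤ) + 1))^2
              * (shiftH (L₁ : ℤ) C ((i : ℤ), (j : ℤ))).2) := by
      have hsplit : L₁ + L₂ + 1 = (L₁ + 1) + L₂ := by omega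
      rw [hsplit, Finset.sum_range_add]
      have hzterm :
          (∑ i ∈ Finset.range (L₂ + 1), ∑ j ∈ Finset.range (A - 1),
            (φ₂ ((i : ℤ), (j : ℤ)) - φ₂ ((i : ℤ), (j : ℤ) + 1))^2
              * (shiftH (L₁ : ℤ) C ((i : ℤ), (j : ℤ))).2)
          = (∑ k ∈ Finset.range L₂, ∑ j ∈ Finset.range (A - 1),
              (φ₂ (((k + 1 : ℕ) : ℤ), (j : ℤ)) - φ₂ (((k + 1 : ℕ) : ℤ), (j : ℤ) + 1))^2
                * (shiftH (L₁ : ℤ) C (((k + 1 : ℕ) : ℤ), (j : ℤ))).2) := by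
        rw [Finset.sum_range_succ']
        have h0 : (∑ j ∈ Finset.range (A - 1),
            (φ₂ (((0 : ℕ) : ℤ), (j : ℤ)) - φ₂ (((0 : ℕ) : ℤ), (j : ℤ) + 1))^2
              * (shiftH (L₁ : ℤ) C (((0 : ℕ) : ℤ), (j : ℤ))).2) = 0 := by
          refine Finset.sum_eq_zero fun j hj => ?_
          rw [Finset.mem_range] at hj
          have e1 : φ₂ (((0 : ℕ) : ℤ), (j : ℤ)) = 0 := by simpa using hzero j (by omega)
          have e2 : φ₂ (((0 : ℕ) : ℤ), (j : ℤ) + 1) = 0 := by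
            have : ((j : ℤ) + 1) = ((j + 1 : ℕ) : ℤ) := by push_cast; ring
            rw [this]
            simpa using hzero (j + 1) (by omega)
          rw [e1, e2]
          simp
        rw [h0, add_zero]
      rw [hzterm]
      congr 1
      · refine Finset.sum_congr rfl fun i hi => Finset.sum_congr rfl fun j hj => ?_
        rw [Finset.mem_range] at hi
        rw [hleft _ _ (by omega), hleft _ _ (by omega)]
      · refine Finset.sum_congr rfl fun k hk => Finset.sum_congr rfl fun j hj => ?_
        rw [Finset.mem_range] at hk
        have hcast : ((L₁ + 1 + k : ℕ) : ℤ) = (L₁ : ℤ) + ((k + 1 : ℕ) : ℤ) := by push_cast; ring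
        rw [hcast, hright (k + 1) (by omega) (j : ℤ), hright (k + 1) (by omega) ((j : ℤ) + 1)]
        have hC : (C ((L₁ : ℤ) + ((k + 1 : ℕ) : ℤ), (j : ℤ))).2
            = (shiftH (L₁ : ℤ) C (((k + 1 : ℕ) : ℤ), (j : ℤ))).2 := by
          simp [shiftH, add_comm]
        rw [hC]
        ring
    rw [hlong, htrans]
    ring

/-- **Subadditivity in `L` of the closed-BC dissipation.**  For a rectangular
resistor network of dimensions `(L₁ + L₂, A)` on `ℤ²` with nonnegative
conductances and closed boundary conditions (potential fixed to `n₁ v₀` on the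
whole boundary), the total dissipation satisfies
`W^CBC_{L₁+L₂, A} ≤ W^CBC_{L₁, A} + W^CBC_{L₂, A} ∘ τ^{L₁}`, where `τ` is the
unit translation in the longitudinal direction on the space of conductance
fields. -/
theorem WCBC_subadditive_longitudinal (C : CField) (hC : nonnegField C)
    (v₀ : ℝ) (hv₀ : 0 < v₀) (L₁ L₂ A : ℕ)
    (hL₁ : 1 ≤ L₁) (hL₂ : 1 ≤ L₂) (hA : 1 ≤ A) :
    WCBC C v₀ (L₁ + L₂) A ≤ WCBC C v₀ L₁ A + WCBC (shiftH L₁ C) v₀ L₂ A := by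
  have hne1 : Nonempty {φ : ℤ × ℤ → ℝ // cbcOK L₁ A v₀ φ} := ⟨⟨_, lin_cbc L₁ A v₀⟩⟩
  have hne2 : Nonempty {φ : ℤ × ℤ → ℝ // cbcOK L₂ A v₀ φ} := ⟨⟨_, lin_cbc L₂ A v₀⟩⟩
  rw [WCBC, WCBC, WCBC]
  refine le_ciInf_add_ciInf fun φ₁ φ₂ => ?_
  obtain ⟨φ, hcbc, heq⟩ := glue C v₀ L₁ L₂ A hL₂ hA φ₁.1 φ₂.1 φ₁.2 φ₂.2
  have hbdd : BddBelow (Set.range fun ψ : {ψ : ℤ × ℤ → ℝ // cbcOK (L₁ + L₂) A v₀ ψ} =>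
      netEnergy C (L₁ + L₂) A ψ.1) := by
    refine ⟨0, ?_⟩
    rintro x ⟨ψ, rfl⟩
    exact netEnergy_nonneg C hC _ _ _
  calc (⨅ ψ : {ψ : ℤ × ℤ → ℝ // cbcOK (L₁ + L₂) A v₀ ψ}, netEnergy C (L₁ + L₂) A ψ.1)
      ≤ netEnergy C (L₁ + L₂) A φ := ciInf_le hbdd ⟨φ, hcbc⟩
    _ = _ := heq
end
end

section
/- Consider a rectangular resistor network of dimensions (L, A) on ℤ² with i.i.d. nonnegative conductances and open boundary conditions (potential fixed only on the two transverse ends to 0 and L v₀). Then W^OBC_{L,A} is superadditive in A for each fixed L: if A = A₁ + A₂, then W^OBC_{L,A} ≥ W^OBC_{L,A₁} + (W^OBC_{L,A₂} ∘ τ_t^{A₁}), where τ_t is the unit translation in the transverse direction on the probability space. -/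
open Filter MeasureTheory Topology

noncomputable section

lemma nonnegField_shiftV (C : CField) (hC : nonnegField C) (k : ℤ) :
    nonnegField (shiftV k C) := fun p => hC _

lemma netEnergy_eq (C : CField) (L A : ℕ) (φ : ℤ × ℤ → ℝ) :
    netEnergy C L A φ =
      (∑ j ∈ Finset.range A, ∑ i ∈ Finset.range L,
        (φ ((i : ℤ), (j : ℤ)) - φ ((i : ℤ) + 1, (j : ℤ)))^2 * (C ((i : ℤ), (j : ℤ))).1) +
      (∑ j ∈ Finset.range (A-1), ∑ i ∈ Finset.range (L+1),
        (φ ((i : ℤ), (j : ℤ)) - φ ((i : ℤ), (j : ℤ) + 1))^2 * (C ((i : ℤ), (j : ℤ))).2) := by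
  rw [netEnergy, Finset.sum_comm, Finset.sum_comm (s := Finset.range (L+1))]

lemma key_split (C : CField) (hC : nonnegField C) (L a b : ℕ) (φ : ℤ × ℤ → ℝ) :
    netEnergy C L (a+1) φ +
      netEnergy (shiftV ((a:ℤ)+1) C) L (b+1) (fun p => φ (p.1, p.2 + ((a:ℤ)+1)))
      ≤ netEnergy C L ((a+1) + (b+1)) φ := by
  set f : ℕ → ℝ := fun j => ∑ i ∈ Finset.range L,
    (φ ((i : ℤ), (j : ℤ)) - φ ((i : ℤ) + 1, (j : ℤ)))^2 * (C ((i : ℤ), (j : ℤ))).1 with hf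
  set g : ℕ → ℝ := fun j => ∑ i ∈ Finset.range (L+1),
    (φ ((i : ℤ), (j : ℤ)) - φ ((i : ℤ), (j : ℤ) + 1))^2 * (C ((i : ℤ), (j : ℤ))).2 with hg
  have hfn : ∀ j, 0 ≤ f j := fun j => Finset.sum_nonneg fun i _ =>
    mul_nonneg (sq_nonneg _) (hC _).1
  have hgn : ∀ j, 0 ≤ g j := fun j => Finset.sum_nonneg fun i _ =>
    mul_nonneg (sq_nonneg _) (hC _).2
  have e1 : netEnergy C L (a+1) φ =
      ∑ j ∈ Finset.range (a+1), f j + ∑ j ∈ Finset.range a, g j := by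
    rw [netEnergy_eq]; simp [hf, hg]
  have e3 : netEnergy C L ((a+1)+(b+1)) φ =
      ∑ j ∈ Finset.range ((a+1)+(b+1)), f j + ∑ j ∈ Finset.range (a+(b+1)), g j := by
    rw [netEnergy_eq]
    have : (a+1)+(b+1) - 1 = a + (b+1) := by omega
    rw [this]
  have e2 : netEnergy (shiftV ((a:ℤ)+1) C) L (b+1) (fun p => φ (p.1, p.2 + ((a:ℤ)+1)))
      = ∑ j ∈ Finset.range (b+1), f ((a+1) + j) + ∑ j ∈ Finset.range b, g ((a+1) + j) := by
    rw [netEnergy_eq]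
    simp only [Nat.add_sub_cancel]
    congr 1
    · apply Finset.sum_congr rfl; intro j _
      apply Finset.sum_congr rfl; intro i _
      simp only [hf, shiftV]
      push_cast
      ring_nf
    · apply Finset.sum_congr rfl; intro j _
      apply Finset.sum_congr rfl; intro i _
      simp only [hg, shiftV]
      push_cast
      ring_nf
  rw [e1, e2, e3]
  rw [Finset.sum_range_add f (a+1) (b+1), Finset.sum_range_add g a (b+1),
    Finset.sum_range_succ' (fun j => g (a + j)) b]
  have : ∀ j ∈ Finset.range b, g (a + (j+1)) = g ((a+1) + j) := by
    intro j _; congr 1; omega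
  rw [Finset.sum_congr rfl this]
  have h0 := hgn (a + 0)
  linarith

lemma obc_nonempty (L A : ℕ) (v₀ : ℝ) : Nonempty {φ : ℤ × ℤ → ℝ // obcOK L A v₀ φ} :=
  ⟨⟨fun p => p.1 * v₀, fun j _ => by constructor <;> simp⟩⟩

lemma WOBC_bddBelow (C : CField) (hC : nonnegField C) (v₀ : ℝ) (L A : ℕ) :
    BddBelow (Set.range fun φ : {φ : ℤ × ℤ → ℝ // obcOK L A v₀ φ} => netEnergy C L A φ.1) := by
  refine ⟨0, ?_⟩
  rintro x ⟨φ, rfl⟩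
  exact netEnergy_nonneg C hC L A φ.1

/-- **Superadditivity in `A` of the open-BC dissipation.**  For a rectangular
resistor network of dimensions `(L, A₁ + A₂)` on `ℤ²` with nonnegative
conductances and open boundary conditions (potential fixed only on the two
transverse ends, to `0` and `L v₀`), the total dissipation satisfies
`W^OBC_{L, A₁+A₂} ≥ W^OBC_{L, A₁} + W^OBC_{L, A₂} ∘ τ_t^{A₁}`, where `τ_t` is
the unit translation in the transverse direction on the space of conductance
fields. -/
theorem WOBC_superadditive_transverse (C : CField) (hC : nonnegField C)
    (v₀ : ℝ) (hv₀ : 0 < v₀) (L A₁ A₂ : ℕ)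
    (hL : 1 ≤ L) (hA₁ : 1 ≤ A₁) (hA₂ : 1 ≤ A₂) :
    WOBC C v₀ L A₁ + WOBC (shiftV A₁ C) v₀ L A₂ ≤ WOBC C v₀ L (A₁ + A₂) := by
  obtain ⟨a, rfl⟩ : ∃ a, A₁ = a + 1 := ⟨A₁ - 1, by omega⟩
  obtain ⟨b, rfl⟩ : ∃ b, A₂ = b + 1 := ⟨A₂ - 1, by omega⟩
  have hcast : ((a + 1 : ℕ) : ℤ) = (a : ℤ) + 1 := by push_cast; ring
  rw [hcast]
  haveI := obc_nonempty L ((a+1) + (b+1)) v₀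
  rw [WOBC]
  apply le_ciInf
  intro ψ
  have hC' : nonnegField (shiftV ((a:ℤ)+1) C) := nonnegField_shiftV C hC _
  have obc1 : obcOK L (a+1) v₀ ψ.1 := by
    intro j hj
    exact ψ.2 j (by simp only [Finset.mem_range] at hj ⊢; omega)
  have obc2 : obcOK L (b+1) v₀ (fun p => ψ.1 (p.1, p.2 + ((a:ℤ)+1))) := by
    intro j hj
    simp only [Finset.mem_range] at hj
    have := ψ.2 (j + (a+1)) (by simp only [Finset.mem_range]; omega)
    constructor
    · have h0 := this.1
      push_cast at h0 ⊢
      convert h0 using 3 <;> ring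
    · have h1 := this.2
      push_cast at h1 ⊢
      convert h1 using 3
      all_goals ring
  have b1 : WOBC C v₀ L (a+1) ≤ netEnergy C L (a+1) ψ.1 :=
    ciInf_le (WOBC_bddBelow C hC v₀ L (a+1)) ⟨ψ.1, obc1⟩
  have b2 : WOBC (shiftV ((a:ℤ)+1) C) v₀ L (b+1)
      ≤ netEnergy (shiftV ((a:ℤ)+1) C) L (b+1) (fun p => ψ.1 (p.1, p.2 + ((a:ℤ)+1))) :=
    ciInf_le (WOBC_bddBelow _ hC' v₀ L (b+1)) ⟨_, obc2⟩
  calc WOBC C v₀ L (a+1) + WOBC (shiftV ((a:ℤ)+1) C) v₀ L (b+1)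
      ≤ netEnergy C L (a+1) ψ.1 +
        netEnergy (shiftV ((a:ℤ)+1) C) L (b+1) (fun p => ψ.1 (p.1, p.2 + ((a:ℤ)+1))) :=
        add_le_add b1 b2
    _ ≤ netEnergy C L ((a+1) + (b+1)) ψ.1 := key_split C hC L a b ψ.1
end
end

section
/- Consider the (L, A) network with closed BC and the inner (L, A−2) network with open BC obtained by removing the top and bottom rows. Then for every realization of the conductances, W^CBC_{L,A} ≤ W^OBC_{L,A−2} + W^tr_{L,A} + W^bound_L, where W^bound_L = v₀² Σ_{k=1}^{2L} C^bound_k is the dissipation of the 2L longitudinal boundary links (each with potential drop v₀), and W^tr_{L,A} is the dissipation of the transverse links joining the boundary rows to the inner network, evaluated at the open-BC extremal potential extended by the boundary values n₁ v₀. -/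
open Filter MeasureTheory Topology

noncomputable section

lemma sum_split (A : ℕ) (hA : 2 ≤ A) (f : ℕ → ℝ) :
    ∑ j ∈ Finset.range A, f j
      = f 0 + (∑ j ∈ Finset.range (A-2), f (j+1)) + f (A-1) := by
  obtain ⟨m, rfl⟩ : ∃ m, A = m + 2 := ⟨A - 2, by omega⟩
  have h1 : m + 2 - 2 = m := by omega
  have h2 : m + 2 - 1 = m + 1 := by omega
  rw [h1, h2, Finset.sum_range_succ, Finset.sum_range_succ']
  ring

/-- **Comparison between closed and open boundary conditions.**  Consider the
`(L, A)` network with closed BC and the inner `(L, A-2)` network (rows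
`1,…,A-2`, described by the shifted field `shiftV 1 C`) with open BC.  Let `ψ`
be an extremal (minimizing) potential for the inner open-BC problem.  Then,
for every realization of the conductances,
`W^CBC_{L,A} ≤ W^OBC_{L,A-2} + W^tr_{L,A} + W^bound_L`, where
`W^bound_L = v₀² ∑_{k=1}^{2L} C^bound_k` is the dissipation of the `2L`
longitudinal links of the two removed boundary rows (each with potential drop
`v₀`), and `W^tr_{L,A}` is the dissipation of the transverse links joining the
two boundary rows to the inner network, evaluated at `ψ` extended by the
boundary values `n₁ v₀`. -/
theorem WCBC_le_inner_WOBC (C : CField) (hC : nonnegField C)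
    (v₀ : ℝ) (hv₀ : 0 < v₀) (L A : ℕ) (hL : 1 ≤ L) (hA : 3 ≤ A)
    (ψ : ℤ × ℤ → ℝ) (hψbc : obcOK L (A - 2) v₀ ψ)
    (hψmin : netEnergy (shiftV 1 C) L (A - 2) ψ = WOBC (shiftV 1 C) v₀ L (A - 2)) :
    WCBC C v₀ L A ≤
      WOBC (shiftV 1 C) v₀ L (A - 2)
      + (∑ i ∈ Finset.range (L + 1),
          ((ψ ((i : ℤ), 0) - i * v₀)^2 * (C ((i : ℤ), 0)).2
           + (ψ ((i : ℤ), (A : ℤ) - 3) - i * v₀)^2 * (C ((i : ℤ), (A : ℤ) - 2)).2))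
      + v₀^2 * (∑ i ∈ Finset.range L,
          ((C ((i : ℤ), 0)).1 + (C ((i : ℤ), (A : ℤ) - 1)).1)) := by
  -- test potential for the closed-BC problem
  set φ : ℤ × ℤ → ℝ :=
    fun p => if p.2 = 0 ∨ p.2 = (A : ℤ) - 1 then p.1 * v₀ else ψ (p.1, p.2 - 1) with hφdef
  have hφ0 : ∀ x : ℤ, φ (x, 0) = x * v₀ := by intro x; simp [hφdef]
  have hφtop : ∀ x : ℤ, φ (x, (A : ℤ) - 1) = x * v₀ := by intro x; simp [hφdef]
  have hφin : ∀ x y : ℤ, y ≠ 0 → y ≠ (A : ℤ) - 1 → φ (x, y) = ψ (x, y - 1) := by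
    intro x y h1 h2
    simp [hφdef, h1, h2]
  have hAcast : ((A - 2 : ℕ) : ℤ) = (A : ℤ) - 2 := by omega
  have hφbc : cbcOK L A v₀ φ := by
    intro i hi j hj h
    rcases h with h | h | h | h
    · -- i = 0
      subst h
      rcases eq_or_ne (j : ℤ) 0 with hj0 | hj0
      · rw [hj0, hφ0]; push_cast; ring
      rcases eq_or_ne (j : ℤ) ((A : ℤ) - 1) with hj1 | hj1
      · rw [hj1, hφtop]; push_cast; ring

      · rw [hφin _ _ hj0 hj1]
        have hjm : (j : ℤ) - 1 = ((j - 1 : ℕ) : ℤ) := by omega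
        have hmem : j - 1 ∈ Finset.range (A - 2) := by
          simp only [Finset.mem_range] at hj ⊢; omega
        rw [hjm]
        have := (hψbc (j - 1) hmem).1
        simpa using this
    · -- i = L
      subst h
      rcases eq_or_ne (j : ℤ) 0 with hj0 | hj0
      · rw [hj0, hφ0]; push_cast; ring
      rcases eq_or_ne (j : ℤ) ((A : ℤ) - 1) with hj1 | hj1
      · rw [hj1, hφtop]; push_cast; ring
      · rw [hφin _ _ hj0 hj1]
        have hjm : (j : ℤ) - 1 = ((j - 1 : ℕ) : ℤ) := by omega
        have hmem : j - 1 ∈ Finset.range (A - 2) := by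
          simp only [Finset.mem_range] at hj ⊢; omega
        rw [hjm]
        exact (hψbc (j - 1) hmem).2
    · subst h; simp only [Nat.cast_zero]; rw [hφ0]; push_cast; ring
    · subst h
      have : ((A - 1 : ℕ) : ℤ) = (A : ℤ) - 1 := by omega
      rw [this, hφtop]; push_cast; ring
  -- the infimum is below the energy of φ
  have hbdd : BddBelow (Set.range fun φ' : {φ' : ℤ × ℤ → ℝ // cbcOK L A v₀ φ'} =>
      netEnergy C L A φ'.1) := by
    refine ⟨0, ?_⟩
    rintro x ⟨φ', rfl⟩
    apply add_nonneg <;> apply Finset.sum_nonneg <;> intro i _ <;>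
      apply Finset.sum_nonneg <;> intro j _
    · exact mul_nonneg (sq_nonneg _) (hC _).1
    · exact mul_nonneg (sq_nonneg _) (hC _).2
  have hle : WCBC C v₀ L A ≤ netEnergy C L A φ :=
    ciInf_le hbdd (⟨φ, hφbc⟩ : {φ' : ℤ × ℤ → ℝ // cbcOK L A v₀ φ'})
  refine hle.trans (le_of_eq ?_)
  rw [← hψmin]
  unfold netEnergy
  -- longitudinal part
  have h1 : (∑ i ∈ Finset.range L, ∑ j ∈ Finset.range A,
        (φ ((i : ℤ), (j : ℤ)) - φ ((i : ℤ) + 1, (j : ℤ)))^2 * (C ((i : ℤ), (j : ℤ))).1)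
      = (∑ i ∈ Finset.range L, ∑ j ∈ Finset.range (A-2),
          (ψ ((i : ℤ), (j : ℤ)) - ψ ((i : ℤ) + 1, (j : ℤ)))^2 * (shiftV 1 C ((i : ℤ), (j : ℤ))).1)
        + v₀^2 * ∑ i ∈ Finset.range L, ((C ((i : ℤ), 0)).1 + (C ((i : ℤ), (A : ℤ) - 1)).1) := by
    rw [Finset.mul_sum, ← Finset.sum_add_distrib]
    refine Finset.sum_congr rfl (fun i _ => ?_)
    rw [sum_split A (by omega)]
    have e0 : (φ ((i : ℤ), ((0:ℕ) : ℤ)) - φ ((i : ℤ) + 1, ((0:ℕ) : ℤ)))^2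
        * (C ((i : ℤ), ((0:ℕ) : ℤ))).1 = v₀^2 * (C ((i : ℤ), 0)).1 := by
      simp only [Nat.cast_zero]
      rw [hφ0, hφ0]; push_cast; ring
    have etop : (φ ((i : ℤ), ((A - 1 : ℕ) : ℤ)) - φ ((i : ℤ) + 1, ((A - 1 : ℕ) : ℤ)))^2
        * (C ((i : ℤ), ((A - 1 : ℕ) : ℤ))).1 = v₀^2 * (C ((i : ℤ), (A : ℤ) - 1)).1 := by
      have hc : ((A - 1 : ℕ) : ℤ) = (A : ℤ) - 1 := by omega
      rw [hc, hφtop, hφtop]; push_cast; ring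
    have ein : ∀ j ∈ Finset.range (A - 2),
        (φ ((i : ℤ), ((j + 1 : ℕ) : ℤ)) - φ ((i : ℤ) + 1, ((j + 1 : ℕ) : ℤ)))^2
          * (C ((i : ℤ), ((j + 1 : ℕ) : ℤ))).1
        = (ψ ((i : ℤ), (j : ℤ)) - ψ ((i : ℤ) + 1, (j : ℤ)))^2
          * (shiftV 1 C ((i : ℤ), (j : ℤ))).1 := by
      intro j hj
      simp only [Finset.mem_range] at hj
      have h1 : ((j + 1 : ℕ) : ℤ) ≠ 0 := by omega
      have h2 : ((j + 1 : ℕ) : ℤ) ≠ (A : ℤ) - 1 := by omega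
      rw [hφin _ _ h1 h2, hφin _ _ h1 h2]
      have h3 : ((j + 1 : ℕ) : ℤ) - 1 = (j : ℤ) := by omega
      have h4 : ((j + 1 : ℕ) : ℤ) = (j : ℤ) + 1 := by omega
      rw [h3, h4, shiftV]
    rw [e0, etop, Finset.sum_congr rfl ein]
    ring
  -- transverse part
  have h2 : (∑ i ∈ Finset.range (L+1), ∑ j ∈ Finset.range (A-1),
        (φ ((i : ℤ), (j : ℤ)) - φ ((i : ℤ), (j : ℤ) + 1))^2 * (C ((i : ℤ), (j : ℤ))).2)
      = (∑ i ∈ Finset.range (L+1), ∑ j ∈ Finset.range (A-2-1),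
          (ψ ((i : ℤ), (j : ℤ)) - ψ ((i : ℤ), (j : ℤ) + 1))^2 * (shiftV 1 C ((i : ℤ), (j : ℤ))).2)
        + (∑ i ∈ Finset.range (L + 1),
          ((ψ ((i : ℤ), 0) - i * v₀)^2 * (C ((i : ℤ), 0)).2
           + (ψ ((i : ℤ), (A : ℤ) - 3) - i * v₀)^2 * (C ((i : ℤ), (A : ℤ) - 2)).2)) := by
    rw [← Finset.sum_add_distrib]
    refine Finset.sum_congr rfl (fun i _ => ?_)
    rw [sum_split (A - 1) (by omega)]
    have h10 : (1 : ℤ) ≠ 0 := by omega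
    have h1A : (1 : ℤ) ≠ (A : ℤ) - 1 := by omega
    have e0 : (φ ((i : ℤ), ((0:ℕ) : ℤ)) - φ ((i : ℤ), ((0:ℕ) : ℤ) + 1))^2
        * (C ((i : ℤ), ((0:ℕ) : ℤ))).2
        = (ψ ((i : ℤ), 0) - i * v₀)^2 * (C ((i : ℤ), 0)).2 := by
      simp only [Nat.cast_zero, zero_add]
      rw [hφ0, hφin _ _ h10 h1A, show (1:ℤ) - 1 = 0 from rfl]
      push_cast
      ring
    have hcA2 : ((A - 1 - 1 : ℕ) : ℤ) = (A : ℤ) - 2 := by omega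
    have hA2ne0 : ((A : ℤ) - 2) ≠ 0 := by omega
    have hA2neA1 : ((A : ℤ) - 2) ≠ (A : ℤ) - 1 := by omega
    have etop : (φ ((i : ℤ), ((A - 1 - 1 : ℕ) : ℤ)) - φ ((i : ℤ), ((A - 1 - 1 : ℕ) : ℤ) + 1))^2
        * (C ((i : ℤ), ((A - 1 - 1 : ℕ) : ℤ))).2
        = (ψ ((i : ℤ), (A : ℤ) - 3) - i * v₀)^2 * (C ((i : ℤ), (A : ℤ) - 2)).2 := by
      rw [hcA2, hφin _ _ hA2ne0 hA2neA1]
      have : (A : ℤ) - 2 + 1 = (A : ℤ) - 1 := by ring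
      rw [this, hφtop]
      have : (A : ℤ) - 2 - 1 = (A : ℤ) - 3 := by ring
      rw [this]
      push_cast
      ring
    have ein : ∀ j ∈ Finset.range (A - 1 - 2),
        (φ ((i : ℤ), ((j + 1 : ℕ) : ℤ)) - φ ((i : ℤ), ((j + 1 : ℕ) : ℤ) + 1))^2
          * (C ((i : ℤ), ((j + 1 : ℕ) : ℤ))).2
        = (ψ ((i : ℤ), (j : ℤ)) - ψ ((i : ℤ), (j : ℤ) + 1))^2
          * (shiftV 1 C ((i : ℤ), (j : ℤ))).2 := by
      intro j hj
      simp only [Finset.mem_range] at hj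
      have h1 : ((j + 1 : ℕ) : ℤ) ≠ 0 := by omega
      have h2 : ((j + 1 : ℕ) : ℤ) ≠ (A : ℤ) - 1 := by omega
      have h1' : ((j + 1 : ℕ) : ℤ) + 1 ≠ 0 := by omega
      have h2' : ((j + 1 : ℕ) : ℤ) + 1 ≠ (A : ℤ) - 1 := by omega
      rw [hφin _ _ h1 h2, hφin _ _ h1' h2']
      have h3 : ((j + 1 : ℕ) : ℤ) - 1 = (j : ℤ) := by omega
      have h4 : ((j + 1 : ℕ) : ℤ) + 1 - 1 = (j : ℤ) + 1 := by omega
      have h5 : ((j + 1 : ℕ) : ℤ) = (j : ℤ) + 1 := by omega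
      rw [h3, h4, h5, shiftV]
    have hrange : A - 1 - 2 = A - 2 - 1 := by omega
    rw [e0, etop, Finset.sum_congr rfl ein, hrange]
    ring
  rw [h1, h2]
  ring
end
end
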